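/- For every finite type σ over Ω and every countable ordinal α ≥ 1, the iteration functional Iter_α^σ is hereditarily positive. -/

import Mathlib

/-!  Framework: finite type structure over Ω = countable ordinals,
     limsup/liminf, transfinite iteration functionals, hereditarily
     positive and hereditarily monotone functionals. -/

noncomputable section
namespace IterOrd

open Ordinal

theorem omega1_pos : (0 : Ordinal) < ω₁ := Ordinal.omega0_pos.trans Ordinal.omega0_lt_omega_one

/-- `Om` is Ω, the set of countable ordinals (ordinals `< ω₁`). -/
abbrev Om : Type 1 := {o : Ordinal // o < ω₁}

/-- Infimum of a subset of Ω (the minimum for nonempty sets; `0` for `∅`). -/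
def infOm (s : Set Om) : Om :=
  ⟨sInf (Subtype.val '' s), by
    rcases (Subtype.val '' s).eq_empty_or_nonempty with h | h
    · rw [h]; simpa using omega1_pos
    · obtain ⟨x, _, he⟩ := csInf_mem h
      exact he ▸ x.2⟩

/-- Supremum of a subset of Ω.  Whenever the supremum of the set exists in Ω
(in particular for every countable subset, by regularity of `ω₁`) this is the
genuine supremum; otherwise it takes a junk value. -/
def supOm (s : Set Om) : Om :=
  if h : sSup (Subtype.val '' s) < ω₁ then ⟨sSup (Subtype.val '' s), h⟩ else ⟨0, omega1_pos⟩

/-- Finite types over the base type `o` (interpreted as Ω). -/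
inductive Ty : Type
  | base : Ty
  | arrow : Ty → Ty → Ty
deriving DecidableEq

/-- The full type structure over Ω: `El base = Ω` and
`El (arrow σ τ)` is the set of all functions `El σ → El τ`. -/
@[reducible] def El : Ty → Type 1
  | .base => Om
  | .arrow σ τ => El σ → El τ

/-- The order on each `El σ`: the ordinal order at base type, pointwise at arrow types. -/
def Le : (σ : Ty) → El σ → El σ → Prop
  | .base => fun x y => x ≤ y
  | .arrow σ τ => fun f g => ∀ x : El σ, Le τ (f x) (g x)

/-- Suprema, computed pointwise at function types. -/
def supEl : (σ : Ty) → Set (El σ) → El σ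
  | .base => supOm
  | .arrow σ τ => fun S (x : El σ) => supEl τ ((fun f : El (.arrow σ τ) => f x) '' S)

/-- Infima, computed pointwise at function types. -/
def infEl : (σ : Ty) → Set (El σ) → El σ
  | .base => infOm
  | .arrow σ τ => fun S (x : El σ) => infEl τ ((fun f : El (.arrow σ τ) => f x) '' S)

/-- `limsup_{ξ→ζ} f ξ = inf_{γ<ζ} sup_{γ≤ξ<ζ} f ξ`. -/
def limsupEl (σ : Ty) (ζ : Ordinal) (f : ∀ ξ : Ordinal, ξ < ζ → El σ) : El σ :=
  infEl σ {y | ∃ γ, ∃ _ : γ < ζ, y = supEl σ {z | ∃ ξ, ∃ h : ξ < ζ, γ ≤ ξ ∧ z = f ξ h}}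

/-- `liminf_{ξ→ζ} f ξ = sup_{γ<ζ} inf_{γ≤ξ<ζ} f ξ`. -/
def liminfEl (σ : Ty) (ζ : Ordinal) (f : ∀ ξ : Ordinal, ξ < ζ → El σ) : El σ :=
  supEl σ {y | ∃ γ, ∃ _ : γ < ζ, y = infEl σ {z | ∃ ξ, ∃ h : ξ < ζ, γ ≤ ξ ∧ z = f ξ h}}

/-- `limsup` of a ζ-indexed sequence of ordinals. -/
def oLimsup (ζ : Ordinal) (a : Ordinal → Ordinal) : Ordinal :=
  sInf {s | ∃ γ, γ < ζ ∧ s = sSup (a '' {ξ | γ ≤ ξ ∧ ξ < ζ})}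

/-- `liminf` of a ζ-indexed sequence of ordinals. -/
def oLiminf (ζ : Ordinal) (a : Ordinal → Ordinal) : Ordinal :=
  sSup {s | ∃ γ, γ < ζ ∧ s = sInf (a '' {ξ | γ ≤ ξ ∧ ξ < ζ})}

/-- The α-iteration functional of type σ:
`Iter 0 f x = x`, `Iter (α+1) f x = f (Iter α f x)`, and
`Iter μ f x = limsup_{ξ→μ} Iter ξ f x` for limit μ. -/
def Iter (σ : Ty) (α : Ordinal) : (El σ → El σ) → El σ → El σ :=
  Ordinal.limitRecOn (motive := fun _ => (El σ → El σ) → El σ → El σ) α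
    (fun _ x => x)
    (fun _ ih f x => f (ih f x))
    (fun μ _ ih f x => limsupEl σ μ (fun ξ h => ih ξ h f x))

/-- The pair (hereditarily positive, ≤hp), defined simultaneously by recursion on the type.
Every element of `Ω` and of `Ω_{ρ→τ}` with `ρ ≠ τ` is h.p., and `≤hp` there is `≤`;
`f : Ω_{τ→τ}` is h.p. iff it preserves h.p., is inflationary on h.p. arguments and is
monotone (w.r.t. `≤hp`) on h.p. arguments; `f ≤hp f'` on `Ω_{τ→τ}` iff `f x ≤hp f' x`
for every h.p. `x`. -/
def HPaux : (σ : Ty) → (El σ → Prop) × (El σ → El σ → Prop)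
  | .base => ⟨fun _ => True, fun x y => x ≤ y⟩
  | .arrow ρ τ =>
      ⟨fun f =>
        if h : ρ = τ then
          (∀ x, (HPaux ρ).1 x → (HPaux τ).1 (f x)) ∧
          (∀ x, (HPaux ρ).1 x → (HPaux τ).2 (cast (congrArg El h) x) (f x)) ∧
          (∀ x y, (HPaux ρ).1 x → (HPaux ρ).1 y → (HPaux ρ).2 x y → (HPaux τ).2 (f x) (f y))
        else True,
       fun f g =>
        if ρ = τ then ∀ x, (HPaux ρ).1 x → (HPaux τ).2 (f x) (g x)
        else Le (.arrow ρ τ) f g⟩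

/-- Hereditarily positive functionals. -/
def Hp (σ : Ty) : El σ → Prop := (HPaux σ).1

/-- The order `≤hp`. -/
def HpLe (σ : Ty) : El σ → El σ → Prop := (HPaux σ).2

/-- `f =hp g` iff `f ≤hp g` and `g ≤hp f`. -/
def HpEq (σ : Ty) (f g : El σ) : Prop := HpLe σ f g ∧ HpLe σ g f

/-- The pair (hereditarily monotone, ≤ on the hereditarily monotone structure),
by recursion on the type.  `f` is hereditarily monotone iff it maps hereditarily
monotone arguments to hereditarily monotone values, monotonically; the order is
pointwise over hereditarily monotone arguments (i.e. the order of `Ω^mon`). -/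
def HMaux : (σ : Ty) → (El σ → Prop) × (El σ → El σ → Prop)
  | .base => ⟨fun _ => True, fun x y => x ≤ y⟩
  | .arrow σ τ =>
      ⟨fun f =>
        (∀ x, (HMaux σ).1 x → (HMaux τ).1 (f x)) ∧
        (∀ x y, (HMaux σ).1 x → (HMaux σ).1 y → (HMaux σ).2 x y → (HMaux τ).2 (f x) (f y)),
       fun f g => ∀ x, (HMaux σ).1 x → (HMaux τ).2 (f x) (g x)⟩

/-- Hereditarily monotone functionals: the members of the type structure `Ω^mon`. -/
def HM (σ : Ty) : El σ → Prop := (HMaux σ).1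

/-- The (pointwise) order of the hereditarily monotone type structure `Ω^mon`. -/
def LeHM (σ : Ty) : El σ → El σ → Prop := (HMaux σ).2

/-- Equality in the hereditarily monotone type structure `Ω^mon`. -/
def EqHM (σ : Ty) (f g : El σ) : Prop := LeHM σ f g ∧ LeHM σ g f

/-! For a fixed h.p. `f`, every `Iter_α f` is h.p. by transfinite induction on `α`: the identity
is h.p., h.p. endomaps are closed under composition, and h.p. elements of any type are closed
under nonempty infima and countable suprema, hence under limsups of countable length (at
`σ → σ`, where `Iter_μ f` is the pointwise limsup of the `Iter_ξ f`). The same induction shows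
that `Iter_α` is `≤hp`-monotone in `f`. Finally `f ≤hp Iter_α f` for `α ≥ 1` needs no
induction: `Iter_{β+1} f x = f (Iter_β f x) ≥hp f x` because `Iter_β f` is inflationary, and
at a limit `μ` every tail `[γ, μ)` of the limsup contains the successor `γ + 1`. -/

lemma sSup_lt_omega1 {s : Set Ordinal} (hc : s.Countable) (hb : ∀ x ∈ s, x < ω₁) :
    sSup s < ω₁ := by
  have := hc.to_subtype
  rw [sSup_eq_iSup']
  exact Ordinal.iSup_lt_omega_one fun x => hb x x.2

lemma countable_Iio_of_lt_omega1 {ζ : Ordinal} (h : ζ < ω₁) : (Set.Iio ζ).Countable := by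
  rw [← Cardinal.le_aleph0_iff_set_countable, Cardinal.mk_Iio_ordinal, Cardinal.lift_le_aleph0,
    ← Order.lt_succ_iff, Cardinal.succ_aleph0, ← Cardinal.lt_omega_iff_card_lt]
  exact h

lemma supOm_le {S : Set Om} {y : Om} (h : ∀ s ∈ S, s ≤ y) : supOm S ≤ y := by
  have hb : sSup (Subtype.val '' S) ≤ y.val := by
    rcases (Subtype.val '' S).eq_empty_or_nonempty with he | hne
    · rw [he, csSup_empty]; exact bot_le
    · exact csSup_le hne (by rintro a ⟨s, hs, rfl⟩; exact h s hs)
  rw [supOm, dif_pos (hb.trans_lt y.2)]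
  exact Subtype.coe_le_coe.1 hb

lemma le_supOm {S : Set Om} (hc : S.Countable) {s : Om} (hs : s ∈ S) : s ≤ supOm S := by
  have hlt : sSup (Subtype.val '' S) < ω₁ :=
    sSup_lt_omega1 (hc.image _) (by rintro a ⟨t, _, rfl⟩; exact t.2)
  rw [supOm, dif_pos hlt]
  refine Subtype.coe_le_coe.1 (le_csSup ⟨ω₁, ?_⟩ ⟨s, hs, rfl⟩)
  rintro a ⟨t, _, rfl⟩; exact t.2.le

lemma infOm_le {S : Set Om} {s : Om} (hs : s ∈ S) : infOm S ≤ s :=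
  Subtype.coe_le_coe.1 (csInf_le' ⟨s, hs, rfl⟩)

lemma le_infOm {S : Set Om} (hne : S.Nonempty) {y : Om} (h : ∀ s ∈ S, y ≤ s) :
    y ≤ infOm S :=
  Subtype.coe_le_coe.1
    (le_csInf (hne.image _) (by rintro a ⟨t, ht, rfl⟩; exact Subtype.coe_le_coe.2 (h t ht)))

lemma hp_arrow_of_ne {ρ τ : Ty} (h : ρ ≠ τ) (f : El (.arrow ρ τ)) : Hp (.arrow ρ τ) f := by
  simp [Hp, HPaux, h]

lemma hp_arrow_iff {τ : Ty} {f : El (.arrow τ τ)} :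
    Hp (.arrow τ τ) f ↔
      (∀ x, Hp τ x → Hp τ (f x)) ∧
      (∀ x, Hp τ x → HpLe τ x (f x)) ∧
      (∀ x y, Hp τ x → Hp τ y → HpLe τ x y → HpLe τ (f x) (f y)) := by
  simp [Hp, HpLe, HPaux]

lemma hpLe_arrow_iff {τ : Ty} {f g : El (.arrow τ τ)} :
    HpLe (.arrow τ τ) f g ↔ ∀ x, Hp τ x → HpLe τ (f x) (g x) := by
  simp [HpLe, Hp, HPaux]

lemma hpLe_arrow_iff_of_ne {ρ τ : Ty} (h : ρ ≠ τ) {f g : El (.arrow ρ τ)} :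
    HpLe (.arrow ρ τ) f g ↔ Le (.arrow ρ τ) f g := by
  simp [HpLe, HPaux, h]

lemma Le.refl : ∀ (τ : Ty) (x : El τ), Le τ x x
  | .base, x => le_refl x
  | .arrow _ τ, f => fun x => Le.refl τ (f x)

lemma Le.trans : ∀ {τ : Ty} {x y z : El τ}, Le τ x y → Le τ y z → Le τ x z
  | .base, _, _, _, h1, h2 => le_trans h1 h2
  | .arrow _ _, _, _, _, h1, h2 => fun x => (h1 x).trans (h2 x)

lemma Le.hpLe : ∀ {τ : Ty} {x y : El τ}, Le τ x y → HpLe τ x y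
  | .base, _, _, h => h
  | .arrow ρ τ, f, g, h => by
    by_cases e : ρ = τ
    · subst e
      exact hpLe_arrow_iff.2 fun x _ => (h x).hpLe
    · exact (hpLe_arrow_iff_of_ne e).2 h

lemma HpLe.refl (τ : Ty) (x : El τ) : HpLe τ x x := (Le.refl τ x).hpLe

lemma HpLe.trans : ∀ {τ : Ty} {x y z : El τ}, HpLe τ x y → HpLe τ y z → HpLe τ x z
  | .base, _, _, _, h1, h2 => le_trans h1 h2
  | .arrow ρ τ, _, _, _, h1, h2 => by
    by_cases e : ρ = τ
    · subst e
      rw [hpLe_arrow_iff] at *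
      exact fun x hx => (h1 x hx).trans (h2 x hx)
    · rw [hpLe_arrow_iff_of_ne e] at *
      exact h1.trans h2

lemma supEl_le : ∀ {τ : Ty} {S : Set (El τ)} {y : El τ},
    (∀ s ∈ S, Le τ s y) → Le τ (supEl τ S) y
  | .base, _, _, h => supOm_le h
  | .arrow _ _, _, _, h => fun x => supEl_le (by rintro z ⟨f, hf, rfl⟩; exact h f hf x)

lemma le_supEl : ∀ {τ : Ty} {S : Set (El τ)}, S.Countable → ∀ {s}, s ∈ S →
    Le τ s (supEl τ S)
  | .base, _, hc, _, hs => le_supOm hc hs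
  | .arrow _ _, _, hc, _, hs => fun _ => le_supEl (hc.image _) ⟨_, hs, rfl⟩

lemma infEl_le : ∀ {τ : Ty} {S : Set (El τ)} {s}, s ∈ S → Le τ (infEl τ S) s
  | .base, _, _, hs => infOm_le hs
  | .arrow _ _, _, _, hs => fun _ => infEl_le ⟨_, hs, rfl⟩

lemma le_infEl : ∀ {τ : Ty} {S : Set (El τ)} {y : El τ}, S.Nonempty →
    (∀ s ∈ S, Le τ y s) → Le τ y (infEl τ S)
  | .base, _, _, hne, h => le_infOm hne h
  | .arrow _ _, _, _, hne, h => fun x =>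
    le_infEl (hne.image _) (by rintro z ⟨f, hf, rfl⟩; exact h f hf x)

lemma supEl_hpLe : ∀ {τ : Ty} {S : Set (El τ)} {y : El τ},
    (∀ s ∈ S, HpLe τ s y) → HpLe τ (supEl τ S) y
  | .base, _, _, h => supOm_le h
  | .arrow ρ τ, S, _, h => by
    by_cases e : ρ = τ
    · subst e
      refine hpLe_arrow_iff.2 fun x hx => supEl_hpLe ?_
      rintro z ⟨f, hf, rfl⟩
      exact hpLe_arrow_iff.1 (h f hf) x hx
    · exact (hpLe_arrow_iff_of_ne e).2 (supEl_le fun s hs => (hpLe_arrow_iff_of_ne e).1 (h s hs))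

lemma hpLe_infEl : ∀ {τ : Ty} {S : Set (El τ)} {y : El τ}, S.Nonempty →
    (∀ s ∈ S, HpLe τ y s) → HpLe τ y (infEl τ S)
  | .base, _, _, hne, h => le_infOm hne h
  | .arrow ρ τ, S, _, hne, h => by
    by_cases e : ρ = τ
    · subst e
      refine hpLe_arrow_iff.2 fun x hx => hpLe_infEl (hne.image _) ?_
      rintro z ⟨f, hf, rfl⟩
      exact hpLe_arrow_iff.1 (h f hf) x hx
    · exact (hpLe_arrow_iff_of_ne e).2
        (le_infEl hne fun s hs => (hpLe_arrow_iff_of_ne e).1 (h s hs))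

lemma hp_infEl : ∀ {τ : Ty} {S : Set (El τ)}, S.Nonempty → (∀ s ∈ S, Hp τ s) →
    Hp τ (infEl τ S)
  | .base, _, _, _ => trivial
  | .arrow ρ τ, S, hne, hS => by
    by_cases e : ρ = τ
    · subst e
      have hS' := fun f hf => hp_arrow_iff.1 (hS f hf)
      have inf_le : ∀ {f} (_ : f ∈ S) x, HpLe ρ (infEl ρ ((fun f => f x) '' S)) (f x) :=
        fun hf x => (infEl_le (S := (fun f : El (.arrow ρ ρ) => f x) '' S) ⟨_, hf, rfl⟩).hpLe
      refine hp_arrow_iff.2 ⟨fun x hx => hp_infEl (hne.image _) ?_, fun x hx => ?_,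
        fun x y hx hy hxy => ?_⟩
      · rintro z ⟨f, hf, rfl⟩
        exact (hS' f hf).1 x hx
      · refine hpLe_infEl (hne.image _) ?_
        rintro z ⟨f, hf, rfl⟩
        exact (hS' f hf).2.1 x hx
      · refine hpLe_infEl (hne.image _) ?_
        rintro z ⟨f, hf, rfl⟩
        exact (inf_le hf x).trans ((hS' f hf).2.2 x y hx hy hxy)
    · exact hp_arrow_of_ne e _

lemma hp_supEl : ∀ {τ : Ty} {S : Set (El τ)}, S.Nonempty → S.Countable →
    (∀ s ∈ S, Hp τ s) → Hp τ (supEl τ S)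
  | .base, _, _, _, _ => trivial
  | .arrow ρ τ, S, hne, hc, hS => by
    by_cases e : ρ = τ
    · subst e
      have hS' := fun f hf => hp_arrow_iff.1 (hS f hf)
      have le_sup : ∀ {f} (_ : f ∈ S) x, HpLe ρ (f x) (supEl ρ ((fun f => f x) '' S)) :=
        fun hf x => (le_supEl (hc.image (fun f : El (.arrow ρ ρ) => f x)) ⟨_, hf, rfl⟩).hpLe
      refine hp_arrow_iff.2 ⟨fun x hx => hp_supEl (hne.image _) (hc.image _) ?_,
        fun x hx => ?_, fun x y hx hy hxy => supEl_hpLe ?_⟩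
      · rintro z ⟨f, hf, rfl⟩
        exact (hS' f hf).1 x hx
      · obtain ⟨f, hf⟩ := hne
        exact ((hS' f hf).2.1 x hx).trans (le_sup hf x)
      · rintro z ⟨f, hf, rfl⟩
        exact ((hS' f hf).2.2 x y hx hy hxy).trans (le_sup hf y)
    · exact hp_arrow_of_ne e _

def tail {X : Type*} {ζ : Ordinal} (a : ∀ ξ, ξ < ζ → X) (γ : Ordinal) : Set X :=
  {z | ∃ ξ, ∃ h : ξ < ζ, γ ≤ ξ ∧ z = a ξ h}

lemma mem_tail {X : Type*} {ζ : Ordinal} (a : ∀ ξ, ξ < ζ → X) {γ ξ : Ordinal} (hξ : ξ < ζ)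
    (hγξ : γ ≤ ξ) : a ξ hξ ∈ tail a γ :=
  ⟨ξ, hξ, hγξ, rfl⟩

lemma countable_tail {X : Type*} {ζ : Ordinal} (hζ : ζ < ω₁) (a : ∀ ξ, ξ < ζ → X)
    (γ : Ordinal) : (tail a γ).Countable := by
  have := (countable_Iio_of_lt_omega1 hζ).to_subtype
  refine (Set.countable_range fun p : Set.Iio ζ => a p.1 p.2).mono ?_
  rintro z ⟨ξ, hξ, _, rfl⟩
  exact ⟨⟨ξ, hξ⟩, rfl⟩

lemma limsupEl_eq_infEl_tail (σ : Ty) {ζ : Ordinal} (a : ∀ ξ, ξ < ζ → El σ) :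
    limsupEl σ ζ a = infEl σ {y | ∃ γ, ∃ _ : γ < ζ, y = supEl σ (tail a γ)} :=
  rfl

lemma limsupEl_le_supEl_tail (σ : Ty) {ζ : Ordinal} (a : ∀ ξ, ξ < ζ → El σ) {γ : Ordinal}
    (hγ : γ < ζ) : Le σ (limsupEl σ ζ a) (supEl σ (tail a γ)) :=
  infEl_le ⟨γ, hγ, rfl⟩

lemma limsupEl_arrow_apply {ρ τ : Ty} {ζ : Ordinal} (a : ∀ ξ, ξ < ζ → El (.arrow ρ τ))
    (x : El ρ) : limsupEl (.arrow ρ τ) ζ a x = limsupEl τ ζ fun ξ h => a ξ h x := by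
  simp only [limsupEl, infEl, supEl]
  congr 1
  ext y
  simp only [Set.mem_image, Set.mem_ofPred_eq]
  constructor
  · rintro ⟨_, ⟨γ, hγ, rfl⟩, rfl⟩
    exact ⟨γ, hγ, congrArg _ (by ext; simp [eq_comm])⟩
  · rintro ⟨γ, hγ, rfl⟩
    exact ⟨_, ⟨γ, hγ, rfl⟩, congrArg _ (by ext; simp [eq_comm])⟩

section Limsup

variable {σ : Ty} {ζ : Ordinal}

lemma hp_limsupEl (hζ : ζ < ω₁) (hζ0 : 0 < ζ) {a : ∀ ξ, ξ < ζ → El σ}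
    (ha : ∀ ξ h, Hp σ (a ξ h)) : Hp σ (limsupEl σ ζ a) := by
  rw [limsupEl_eq_infEl_tail]
  refine hp_infEl ⟨_, 0, hζ0, rfl⟩ ?_
  rintro _ ⟨γ, hγ, rfl⟩
  refine hp_supEl ⟨a γ hγ, γ, hγ, le_rfl, rfl⟩ (countable_tail hζ a γ) ?_
  rintro _ ⟨ξ, hξ, _, rfl⟩
  exact ha ξ hξ

lemma hpLe_limsupEl (hζ : ζ < ω₁) (hζ0 : 0 < ζ) {a : ∀ ξ, ξ < ζ → El σ} {y : El σ}
    (hy : ∀ γ < ζ, ∃ ξ, ∃ h : ξ < ζ, γ ≤ ξ ∧ HpLe σ y (a ξ h)) :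
    HpLe σ y (limsupEl σ ζ a) := by
  rw [limsupEl_eq_infEl_tail]
  refine hpLe_infEl ⟨supEl σ (tail a 0), 0, hζ0, rfl⟩ ?_
  rintro _ ⟨γ, hγ, rfl⟩
  obtain ⟨ξ, hξ, hγξ, hyξ⟩ := hy γ hγ
  exact hyξ.trans (le_supEl (countable_tail hζ a γ) (mem_tail a hξ hγξ)).hpLe

lemma limsupEl_hpLe_limsupEl (hζ : ζ < ω₁) (hζ0 : 0 < ζ) {a b : ∀ ξ, ξ < ζ → El σ}
    (hab : ∀ ξ h, HpLe σ (a ξ h) (b ξ h)) :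
    HpLe σ (limsupEl σ ζ a) (limsupEl σ ζ b) := by
  conv_rhs => rw [limsupEl_eq_infEl_tail]
  refine hpLe_infEl ⟨supEl σ (tail b 0), 0, hζ0, rfl⟩ ?_
  rintro _ ⟨γ, hγ, rfl⟩
  refine (limsupEl_le_supEl_tail σ a hγ).hpLe.trans (supEl_hpLe ?_)
  rintro _ ⟨ξ, hξ, hγξ, rfl⟩
  exact (hab ξ hξ).trans (le_supEl (countable_tail hζ b γ) (mem_tail b hξ hγξ)).hpLe

end Limsup

lemma hp_id (τ : Ty) : Hp (.arrow τ τ) id :=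
  hp_arrow_iff.2 ⟨fun _ hx => hx, fun x _ => HpLe.refl τ x, fun _ _ _ _ hxy => hxy⟩

lemma hp_comp {τ : Ty} {f g : El (.arrow τ τ)} (hf : Hp (.arrow τ τ) f)
    (hg : Hp (.arrow τ τ) g) : Hp (.arrow τ τ) (f ∘ g) := by
  obtain ⟨hf1, hf2, hf3⟩ := hp_arrow_iff.1 hf
  obtain ⟨hg1, hg2, hg3⟩ := hp_arrow_iff.1 hg
  exact hp_arrow_iff.2 ⟨fun x hx => hf1 _ (hg1 x hx), fun x hx => (hg2 x hx).trans
    (hf2 _ (hg1 x hx)), fun x y hx hy hxy => hf3 _ _ (hg1 x hx) (hg1 y hy) (hg3 x y hx hy hxy)⟩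

lemma comp_hpLe_comp {τ : Ty} {f f' g g' : El (.arrow τ τ)} (hf : Hp (.arrow τ τ) f)
    (hf' : Hp (.arrow τ τ) f') (hg' : Hp (.arrow τ τ) g') (hfg : HpLe (.arrow τ τ) f g)
    (hfg' : HpLe (.arrow τ τ) f' g') : HpLe (.arrow τ τ) (f ∘ f') (g ∘ g') := by
  refine hpLe_arrow_iff.2 fun x hx => ?_
  have hf'x := (hp_arrow_iff.1 hf').1 x hx
  have hg'x := (hp_arrow_iff.1 hg').1 x hx
  exact ((hp_arrow_iff.1 hf).2.2 _ _ hf'x hg'x (hpLe_arrow_iff.1 hfg' x hx)).trans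
    (hpLe_arrow_iff.1 hfg _ hg'x)

lemma iter_zero (σ : Ty) (f : El σ → El σ) : Iter σ 0 f = id := by
  funext x
  rw [Iter, Ordinal.limitRecOn_zero]
  rfl

lemma iter_add_one (σ : Ty) (β : Ordinal) (f : El σ → El σ) :
    Iter σ (β + 1) f = f ∘ Iter σ β f := by
  funext x
  rw [Iter, Ordinal.limitRecOn_add_one]
  rfl

lemma iter_limit (σ : Ty) {μ : Ordinal} (hμ : Order.IsSuccLimit μ) (f : El σ → El σ) :
    Iter σ μ f = limsupEl (.arrow σ σ) μ fun ξ _ => Iter σ ξ f := by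
  funext x
  rw [limsupEl_arrow_apply, Iter, Ordinal.limitRecOn_limit _ _ _ _ hμ]
  rfl

section Iteration

variable {σ : Ty} {f g : El σ → El σ}

theorem hp_iter (hf : Hp (.arrow σ σ) f) {α : Ordinal} (hα : α < ω₁) :
    Hp (.arrow σ σ) (Iter σ α f) := by
  induction α using Ordinal.limitRecOn with
  | zero => rw [iter_zero]; exact hp_id σ
  | add_one β ih =>
    rw [iter_add_one]
    exact hp_comp hf (ih ((lt_add_one β).trans hα))
  | limit μ hμ ih =>
    rw [iter_limit σ hμ]
    exact hp_limsupEl hα hμ.bot_lt fun ξ h => ih ξ h (h.trans hα)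

lemma hpLe_iter_add_one (hf : Hp (.arrow σ σ) f) {β : Ordinal} (hβ : β < ω₁) :
    HpLe (.arrow σ σ) f (Iter σ (β + 1) f) := by
  obtain ⟨hβ1, hβ2, -⟩ := hp_arrow_iff.1 (hp_iter hf hβ)
  rw [iter_add_one]
  exact hpLe_arrow_iff.2 fun x hx => (hp_arrow_iff.1 hf).2.2 x _ hx (hβ1 x hx) (hβ2 x hx)

theorem hpLe_iter (hf : Hp (.arrow σ σ) f) {α : Ordinal} (hα1 : 1 ≤ α) (hα : α < ω₁) :
    HpLe (.arrow σ σ) f (Iter σ α f) := by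
  induction α using Ordinal.limitRecOn with
  | zero => exact absurd hα1 (by simp)
  | add_one β _ => exact hpLe_iter_add_one hf ((lt_add_one β).trans hα)
  | limit μ hμ _ =>
    rw [iter_limit σ hμ]
    exact hpLe_limsupEl hα hμ.bot_lt fun γ hγ =>
      ⟨_, hμ.add_one_lt hγ, le_self_add, hpLe_iter_add_one hf (hγ.trans hα)⟩

theorem iter_hpLe_iter (hf : Hp (.arrow σ σ) f) (hg : Hp (.arrow σ σ) g)
    (hfg : HpLe (.arrow σ σ) f g) {α : Ordinal} (hα : α < ω₁) :
    HpLe (.arrow σ σ) (Iter σ α f) (Iter σ α g) := by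
  induction α using Ordinal.limitRecOn with
  | zero => rw [iter_zero, iter_zero]; exact HpLe.refl _ _
  | add_one β ih =>
    have hβ := (lt_add_one β).trans hα
    rw [iter_add_one, iter_add_one]
    exact comp_hpLe_comp hf (hp_iter hf hβ) (hp_iter hg hβ) hfg (ih hβ)
  | limit μ hμ ih =>
    rw [iter_limit σ hμ, iter_limit σ hμ]
    exact limsupEl_hpLe_limsupEl hα hμ.bot_lt fun ξ h => ih ξ h (h.trans hα)

end Iteration

/-- For every finite type `σ` and countable ordinal `α ≥ 1`,
`Iter_α^σ` is hereditarily positive. -/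
theorem iter_hp (σ : Ty) (α : Ordinal) (hα1 : 1 ≤ α) (hα : α < ω₁) :
    Hp (.arrow (.arrow σ σ) (.arrow σ σ)) (Iter σ α) :=
  hp_arrow_iff.2 ⟨fun _ hf => hp_iter hf hα, fun _ hf => hpLe_iter hf hα1 hα,
    fun _ _ hf hg hfg => iter_hpLe_iter hf hg hfg hα⟩

end IterOrd
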